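/- For a metric space (X, d) with d ≤ 1, the canonical inclusion of X into its free Banach space B(X) (sending x to the basis vector 1·x) is an isometric embedding: ‖1·x − 1·y‖ = d(x, y) for all x, y ∈ X. -/

import Mathlib

/-
The lower bound comes from duality: if `g : X ⊔ {*} → ℝ` vanishes at `*` and satisfies
`|g u - g v| ≤ d(u, v)`, then the linear extension of `g` kills every `∑ λᵢ yᵢ ∈ Span{*}`, so on any
representation of `w` it is bounded by `∑ |λᵢ| d(xᵢ, yᵢ)`, whence `|g(w)| ≤ ‖w‖`. Taking
`g = d(·, y)` on `X` (admissible because `d ≤ 1`) gives `d(x, y) ≤ ‖x - y‖`; the representation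
`x - y = 1·(x, x) - 1·(y, x)` gives the reverse inequality.
-/

noncomputable section

noncomputable section

/-- The metric on `X ⊔ {*}` (with `none` playing the role of the basepoint `*`),
where the new point `*` is at distance `1` from every point of `X`. -/
def optDist (X : Type) [MetricSpace X] : Option X → Option X → ℝ
  | some x, some y => dist x y
  | none, none => 0
  | _, _ => 1

/-- The candidate norm on the free real vector space `L(X)` with Hamel basis `X ⊔ {*}`
(realized as finitely supported functions `Option X →₀ ℝ`): the infimum of
`∑ᵢ |λᵢ| d(xᵢ, yᵢ)` over all representations `∑ᵢ λᵢ xᵢ = w` with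
`∑ᵢ λᵢ yᵢ ∈ Span{*}`. -/
def freeNorm (X : Type) [MetricSpace X] (w : Option X →₀ ℝ) : ℝ :=
  sInf { r : ℝ | ∃ (n : ℕ) (lam : Fin n → ℝ) (a b : Fin n → Option X),
    (∑ i, lam i • Finsupp.single (a i) (1 : ℝ)) = w ∧
    (∃ c : ℝ, (∑ i, lam i • Finsupp.single (b i) (1 : ℝ)) =
        c • Finsupp.single (none : Option X) (1 : ℝ)) ∧
    r = ∑ i, |lam i| * optDist X (a i) (b i) }

open Finsupp (single linearCombination linearCombination_single smul_single_one)

section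

variable {X : Type} [MetricSpace X]

lemma optDist_nonneg (u v : Option X) : 0 ≤ optDist X u v := by
  match u, v with
  | some _, some _ => exact dist_nonneg
  | none, none => exact le_rfl
  | some _, none => exact zero_le_one
  | none, some _ => exact zero_le_one

/-- The set whose infimum is `freeNorm X w`. -/
def reprCosts (X : Type) [MetricSpace X] (w : Option X →₀ ℝ) : Set ℝ :=
  { r : ℝ | ∃ (n : ℕ) (lam : Fin n → ℝ) (a b : Fin n → Option X),
    (∑ i, lam i • Finsupp.single (a i) (1 : ℝ)) = w ∧
    (∃ c : ℝ, (∑ i, lam i • Finsupp.single (b i) (1 : ℝ)) =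
        c • Finsupp.single (none : Option X) (1 : ℝ)) ∧
    r = ∑ i, |lam i| * optDist X (a i) (b i) }

lemma reprCosts_bddBelow (w : Option X →₀ ℝ) : BddBelow (reprCosts X w) := by
  refine ⟨0, ?_⟩
  rintro r ⟨n, lam, a, b, -, -, rfl⟩
  exact Finset.sum_nonneg fun i _ => mul_nonneg (abs_nonneg _) (optDist_nonneg _ _)

lemma reprCosts_nonempty (w : Option X →₀ ℝ) : (reprCosts X w).Nonempty := by
  -- pair each point of the support of `w` with `*`
  let e := w.support.equivFin.symm
  refine ⟨_, w.support.card, fun i => w (e i), fun i => e i, fun _ => none, ?_,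
    ⟨∑ i, w (e i), by simp only [Finset.sum_smul]⟩, rfl⟩
  calc (∑ i, w (e i) • single (e i : Option X) (1 : ℝ))
      = ∑ u : w.support, w u • single (u : Option X) (1 : ℝ) :=
        e.sum_comp fun u : w.support => w u • single (u : Option X) (1 : ℝ)
    _ = w := by
        rw [Finset.sum_coe_sort w.support fun u => w u • single u (1 : ℝ)]
        simp only [smul_single_one]
        exact w.sum_single

lemma freeNorm_le_of_mem_reprCosts {w : Option X →₀ ℝ} {r : ℝ} (hr : r ∈ reprCosts X w) :
    freeNorm X w ≤ r :=
  csInf_le (reprCosts_bddBelow w) hr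

lemma abs_linearCombination_le_freeNorm {g : Option X → ℝ} (hg_none : g none = 0)
    (hg : ∀ u v, |g u - g v| ≤ optDist X u v) (w : Option X →₀ ℝ) :
    |linearCombination ℝ g w| ≤ freeNorm X w := by
  refine le_csInf (reprCosts_nonempty w) ?_
  rintro r ⟨n, lam, a, b, rfl, ⟨c, hb⟩, rfl⟩
  have hgb : ∑ i, lam i * g (b i) = 0 := by
    simpa [map_sum, linearCombination_single, hg_none] using
      congrArg (linearCombination ℝ g) hb
  calc |linearCombination ℝ g (∑ i, lam i • single (a i) (1 : ℝ))|
      = |∑ i, lam i * (g (a i) - g (b i))| := by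
        simp [map_sum, linearCombination_single, mul_sub, hgb]
    _ ≤ ∑ i, |lam i| * |g (a i) - g (b i)| := by
        simpa only [abs_mul] using
          Finset.abs_sum_le_sum_abs (fun i => lam i * (g (a i) - g (b i))) Finset.univ
    _ ≤ ∑ i, |lam i| * optDist X (a i) (b i) :=
        Finset.sum_le_sum fun i _ => mul_le_mul_of_nonneg_left (hg _ _) (abs_nonneg _)

lemma abs_elim_sub_elim_le_optDist {f : X → ℝ} (hf : LipschitzWith 1 f)
    (hf_le : ∀ x, |f x| ≤ 1) (u v : Option X) :
    |u.elim 0 f - v.elim 0 f| ≤ optDist X u v := by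
  match u, v with
  | some a, some b => simpa [optDist, Real.dist_eq] using hf.dist_le_mul a b
  | some a, none => simpa [optDist] using hf_le a
  | none, some b => simpa [optDist] using hf_le b
  | none, none => simp [optDist]

lemma freeNorm_single_sub_single_le (x y : X) :
    freeNorm X (single (some x) 1 - single (some y) 1) ≤ dist x y := by
  refine freeNorm_le_of_mem_reprCosts ⟨2, ![1, -1], ![some x, some y], ![some x, some x],
    ?_, ⟨0, ?_⟩, ?_⟩
  · simp [Fin.sum_univ_two, sub_eq_add_neg]
  · simp [Fin.sum_univ_two]
  · simp [Fin.sum_univ_two, optDist, dist_comm y x]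

end

/-- the canonical inclusion of `X` into its free Banach space `B(X)`
(sending `x` to the basis vector `1·x`) is an isometric embedding:
`‖1·x − 1·y‖ = d(x, y)` for all `x, y ∈ X`. (Since `L(X)` embeds isometrically in
its completion `B(X)`, this is equivalently stated via the norm of `L(X)`.) -/
theorem freeSpace_inclusion_isometry (X : Type) [MetricSpace X]
    (hd : ∀ x y : X, dist x y ≤ 1) (x y : X) :
    freeNorm X (Finsupp.single (some x) (1 : ℝ) - Finsupp.single (some y) (1 : ℝ)) =
      dist x y := by
  refine le_antisymm (freeNorm_single_sub_single_le x y) ?_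
  have hg := abs_elim_sub_elim_le_optDist (LipschitzWith.dist_left y)
    (fun z => (abs_of_nonneg dist_nonneg).trans_le (hd z y))
  have hdual := abs_linearCombination_le_freeNorm (by rfl) hg
    (single (some x) 1 - single (some y) 1)
  simpa [linearCombination_single] using hdual
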